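/- Let P_m be a point set of F^m points in [0,1)^2. If P_m is strongly (m−k, k)-equidistributed in base φ for every integer 0 ≤ k ≤ m, then P_m is a (1,m,2)-net in base φ. -/

import Mathlib

open Finset

/-- `F m` denotes `F^m := F_{m+2}`, the Fibonacci numbers with shifted index,
so `F^{-2} = 0`, `F^{-1} = 1`, `F^0 = 1`, `F^1 = 2`, … (and `F^m = 0` for `m < -2`). -/
def F (m : ℤ) : ℕ := Nat.fib (m + 2).toNat

lemma F_pos (m : ℤ) (h : -2 < m) : 0 < F m := Nat.fib_pos.mpr (by omega)

/-- The set of indices of the `1` digits in the (unique) Zeckendorf representation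
`n = ∑_{j ∈ zeckSet n} F^j` (no two consecutive indices), computed greedily. -/
def zeckSet : ℕ → Finset ℕ
  | 0 => ∅
  | (n + 1) =>
      insert (Nat.findGreatest (fun i => F i ≤ n + 1) (n + 1))
        (zeckSet (n + 1 - F (Nat.findGreatest (fun i => F i ≤ n + 1) (n + 1))))
decreasing_by exact Nat.sub_lt (Nat.succ_pos n) (F_pos _ (by omega))

/-- The golden ratio `φ = (1 + √5)/2`. -/
noncomputable def phi : ℝ := (1 + Real.sqrt 5) / 2

/-- `|n|`, the zeroth Zeckendorf digit of `n`. -/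
def zd0 (n : ℕ) : ℕ := if 0 ∈ zeckSet n then 1 else 0

/-- `n‾ = ∑_j d_j φ^j`, the `n`-th whole number in base `φ`. -/
noncomputable def zbar (n : ℕ) : ℝ := ∑ j ∈ zeckSet n, phi ^ j

/-- `n ⊙ φ^k = ∑_j d_j F^{j+k}`, the Zeckendorf digit shift. -/
def zshift (n : ℕ) (k : ℤ) : ℕ := ∑ j ∈ zeckSet n, F (j + k)

/-- The `n`-th term of the van der Corput sequence in base φ:
`g_n = ∑_j d_j φ^(−j−1)` where `n = ∑_j d_j F^j` is the Zeckendorf representation. -/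
noncomputable def vdc (n : ℕ) : ℝ := ∑ j ∈ zeckSet n, phi ^ (-(j : ℤ) - 1)

/-- The number of points of the planar point set `P` lying in
`[c₁‾/φ^{k₁}, (c₁+1)‾/φ^{k₁}) × [c₂‾/φ^{k₂}, (c₂+1)‾/φ^{k₂})`. -/
noncomputable def cnt2 (N : ℕ) (P : Fin N → ℝ × ℝ) (k₁ k₂ c₁ c₂ : ℕ) : ℕ :=
  Nat.card {i : Fin N //
    (P i).1 ∈ Set.Ico (zbar c₁ / phi ^ k₁) (zbar (c₁ + 1) / phi ^ k₁) ∧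
    (P i).2 ∈ Set.Ico (zbar c₂ / phi ^ k₂) (zbar (c₂ + 1) / phi ^ k₂)}

/-- A planar point set `P` of `F^m` points is *(k₁,k₂)-equidistributed in base φ* if
every prime elementary `(k₁,k₂)`-interval (each `a_j < F^{k_j}` with first Zeckendorf
digit `d_1` of `a_j` equal to `0`) contains exactly `F^(m−|I|)` of its points, where
`|I| = (k₁ + |a₁|) + (k₂ + |a₂|)`. -/
def Equidistributed2 (m k₁ k₂ : ℕ) (P : Fin (F m) → ℝ × ℝ) : Prop :=
  ∀ a₁ a₂ : ℕ, a₁ < F k₁ → a₂ < F k₂ → 1 ∉ zeckSet a₁ → 1 ∉ zeckSet a₂ →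
    cnt2 (F m) P k₁ k₂ a₁ a₂ =
      F ((m : ℤ) - ((k₁ : ℤ) + (zd0 a₁ : ℤ)) - ((k₂ : ℤ) + (zd0 a₂ : ℤ)))

/-- `ρ(k₁,k₂) = k₁ + k₂ + #{j : k_j > 0}`. -/
def rho2 (k₁ k₂ : ℕ) : ℕ :=
  k₁ + k₂ + (if 0 < k₁ then 1 else 0) + (if 0 < k₂ then 1 else 0)

/-- A planar point set of `F^m` points is a *(t,m,2)-net in base φ* if it is
`(k₁,k₂)`-equidistributed for all `(k₁,k₂)` with `ρ(k₁,k₂) ≤ m+2−t`. -/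
def IsNet2 (t m : ℕ) (P : Fin (F m) → ℝ × ℝ) : Prop :=
  ∀ k₁ k₂ : ℕ, rho2 k₁ k₂ + t ≤ m + 2 → Equidistributed2 m k₁ k₂ P

/-- A planar point set `P` of `F^N` points is *strongly (m₁,m₂)-equidistributed in
base φ* if every interval `I` of the `(m₁,m₂)`-partition (all `a_j < F^{m_j}`) contains
exactly `F^(N−|I|)` of its points, where `|I| = (m₁ + |a₁|) + (m₂ + |a₂|)`. -/
def StronglyEquidistributed2 (N m₁ m₂ : ℕ) (P : Fin (F N) → ℝ × ℝ) : Prop :=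
  ∀ a₁ a₂ : ℕ, a₁ < F m₁ → a₂ < F m₂ →
    cnt2 (F N) P m₁ m₂ a₁ a₂ =
      F ((N : ℤ) - ((m₁ : ℤ) + (zd0 a₁ : ℤ)) - ((m₂ : ℤ) + (zd0 a₂ : ℤ)))

/-!
Every interval of the `(k₁,k₂)`-partition with `k₁ + k₂ ≤ m` is a disjoint union of intervals of
the `(k₁, m - k₁)`-partition. With `d = m - k₁ - k₂`, the base-φ interval `[a‾/φ^k, (a+1)‾/φ^k)`
is the union of the `F^(d-|a|)` consecutive intervals of level `k + d` with indices
`a ⊙ φ^d + c`, `c < F^(d-|a|)`; the digits of `c` sit below those of `a ⊙ φ^d`, so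
`|a ⊙ φ^d + c| = |c|`. Summing the counts `F^(m-|I|)` of these intervals with the identity
`∑_{c < F^K} F^(x-|c|) = F^(x+K)` gives the count required of the big interval, so the point set
is even strongly `(k₁,k₂)`-equidistributed for all `k₁ + k₂ ≤ m`.

The steps `(n+1)‾ - n‾ = φ^(-|n|)` and `(n+1) ⊙ φ^d - n ⊙ φ^d = F^(d-|n|)` are two instances of
one identity for digit sums weighted by a solution of the Fibonacci recurrence.
-/

lemma F_natCast (n : ℕ) : F n = Nat.fib (n + 2) := by
  simp [F, show ((n : ℤ) + 2).toNat = n + 2 by omega]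

@[simp] lemma F_zero : F 0 = 1 := rfl

@[simp] lemma F_one : F 1 = 2 := rfl

lemma F_add_two {x : ℤ} (hx : -2 ≤ x) : F (x + 2) = F (x + 1) + F x := by
  obtain ⟨n, rfl⟩ : ∃ n : ℕ, x = n - 2 := ⟨(x + 2).toNat, by omega⟩
  unfold F
  rw [show ((n : ℤ) - 2 + 2 + 2).toNat = n + 2 by omega,
    show ((n : ℤ) - 2 + 1 + 2).toNat = n + 1 by omega, show ((n : ℤ) - 2 + 2).toNat = n by omega,
    Nat.fib_add_two, add_comm]

lemma F_monotone : Monotone F := fun _ _ h => Nat.fib_mono (by omega)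

lemma F_add_one {k : ℤ} (hk : -1 ≤ k) : F (k + 1) = F k + F (k - 1) := by
  have h := F_add_two (show -2 ≤ k - 1 by omega)
  rwa [sub_add_cancel, show k - 1 + 2 = k + 1 by ring] at h

lemma F_lt_F_add_one {k : ℤ} (hk : 0 ≤ k) : F k < F (k + 1) := by
  rw [F_add_one (by omega)]
  exact Nat.lt_add_of_pos_right (F_pos (k - 1) (by omega))

lemma exists_F_le_lt_F_succ {n : ℕ} (hn : n ≠ 0) : ∃ k : ℕ, F k ≤ n ∧ n < F (k + 1) := by
  have h2 : 2 ≤ Nat.greatestFib n := Nat.le_greatestFib.mpr (by simp; omega)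
  refine ⟨Nat.greatestFib n - 2, ?_, ?_⟩
  · rw [F_natCast, Nat.sub_add_cancel h2]
    exact Nat.fib_greatestFib_le n
  · have := Nat.lt_fib_greatestFib_add_one n
    rwa [show ((Nat.greatestFib n - 2 : ℕ) : ℤ) + 1 = ((Nat.greatestFib n - 1 : ℕ) : ℤ) by omega,
      F_natCast, show Nat.greatestFib n - 1 + 2 = Nat.greatestFib n + 1 by omega]

lemma natCast_lt_F (k : ℕ) : k < F k := by
  induction k with
  | zero => decide
  | succ k ih =>
    push_cast
    have := F_lt_F_add_one (show 0 ≤ (k : ℤ) by omega)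
    omega

lemma zeckSet_zero : zeckSet 0 = ∅ := by
  rw [zeckSet]

lemma zeckSet_eq_insert {n k : ℕ} (hk : F k ≤ n) (hn : n < F (k + 1)) :
    zeckSet n = insert k (zeckSet (n - F k)) := by
  obtain ⟨n, rfl⟩ : ∃ n', n = n' + 1 := ⟨n - 1, by have := F_pos k (by omega); omega⟩
  have hgreatest : Nat.findGreatest (fun i : ℕ => F i ≤ n + 1) (n + 1) = k := by
    refine Nat.findGreatest_eq_iff.mpr ⟨?_, fun _ => hk, fun j hkj _ hj => ?_⟩
    · have := natCast_lt_F k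
      omega
    · have := F_monotone (show ((k : ℤ) + 1) ≤ j by omega)
      omega
  rw [zeckSet, hgreatest]

lemma F_le_of_mem_zeckSet {n j : ℕ} (hj : j ∈ zeckSet n) : F j ≤ n := by
  induction n using Nat.strong_induction_on with
  | _ n ih =>
  rcases eq_or_ne n 0 with rfl | hn
  · simp [zeckSet_zero] at hj
  obtain ⟨k, hk, hnk⟩ := exists_F_le_lt_F_succ hn
  rw [zeckSet_eq_insert hk hnk, Finset.mem_insert] at hj
  rcases hj with rfl | hj
  · exact hk
  · have := ih _ (by have := F_pos k (by omega); omega) hj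
    omega

lemma lt_of_mem_zeckSet {n j : ℕ} {k : ℤ} (hn : n < F k) (hj : j ∈ zeckSet n) : (j : ℤ) < k := by
  by_contra! hkj
  have := F_monotone hkj
  have := F_le_of_mem_zeckSet hj
  omega

lemma sub_F_lt_F_sub_one {n k : ℕ} (hn : n < F (k + 1)) : n - F k < F (k - 1) := by
  have := F_add_one (show -1 ≤ (k : ℤ) by omega)
  have := F_pos (k - 1) (by omega)
  omega

lemma zeckSet_F (k : ℕ) : zeckSet (F k) = {k} := by
  rw [zeckSet_eq_insert le_rfl (F_lt_F_add_one (by omega)), Nat.sub_self,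
    zeckSet_zero]
  rfl

lemma zeckSet_one : zeckSet 1 = {0} := zeckSet_F 0

lemma zeckSet_two : zeckSet 2 = {1} := zeckSet_F 1

section FibonacciWeights

variable {M : Type*} [AddCommGroup M] (G : ℕ → M)

lemma sum_zeckSet_eq_add {n k : ℕ} (hk : F k ≤ n) (hn : n < F (k + 1)) :
    ∑ j ∈ zeckSet n, G j = G k + ∑ j ∈ zeckSet (n - F k), G j := by
  rw [zeckSet_eq_insert hk hn, Finset.sum_insert]
  intro hmem
  have := lt_of_mem_zeckSet (sub_F_lt_F_sub_one hn) hmem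
  omega

/-- `G 1 - G 0` is the weight that the recurrence assigns to the digit `-1`. -/
theorem sum_zeckSet_succ (hG : ∀ j, G (j + 2) = G (j + 1) + G j) (n : ℕ) :
    ∑ j ∈ zeckSet (n + 1), G j =
      ∑ j ∈ zeckSet n, G j + if 0 ∈ zeckSet n then G 1 - G 0 else G 0 := by
  induction n using Nat.strong_induction_on with
  | _ n ih =>
  rcases eq_or_ne n 0 with rfl | hn
  · simp [zeckSet_zero, zeckSet_one]
  obtain ⟨k, hk, hnk⟩ := exists_F_le_lt_F_succ hn
  rcases eq_or_ne k 0 with rfl | hk0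
  · obtain rfl : n = 1 := by
      simp only [Nat.cast_zero, zero_add, F_one] at hnk
      omega
    simp [zeckSet_one, zeckSet_two]
  have hzero : 0 ∈ zeckSet n ↔ 0 ∈ zeckSet (n - F k) := by
    rw [zeckSet_eq_insert hk hnk, Finset.mem_insert]
    exact or_iff_right hk0.symm
  have hFk := F_pos k (by omega)
  rw [sum_zeckSet_eq_add G hk hnk, if_congr hzero rfl rfl, add_assoc]
  rcases (show n + 1 ≤ F (k + 1) from hnk).lt_or_eq with hlt | heq
  · rw [sum_zeckSet_eq_add G (show F k ≤ n + 1 by omega) hlt,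
      show n + 1 - F k = n - F k + 1 by omega, ih _ (by omega)]
  · have hnext : n - F k + 1 = F ((k - 1 : ℕ)) := by
      have := F_add_one (show -1 ≤ (k : ℤ) by omega)
      rw [show (k : ℤ) - 1 = ((k - 1 : ℕ) : ℤ) by omega] at this
      omega
    have hprev := ih (n - F k) (by omega)
    rw [hnext, zeckSet_F, Finset.sum_singleton] at hprev
    rw [show n + 1 = F ((k + 1 : ℕ)) by push_cast; omega, zeckSet_F, Finset.sum_singleton, ← hprev,
      show k + 1 = k - 1 + 2 by omega, hG, show k - 1 + 1 = k by omega]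

end FibonacciWeights

lemma sum_zeckSet_F (n : ℕ) : ∑ j ∈ zeckSet n, F j = n := by
  induction n with
  | zero => simp [zeckSet_zero]
  | succ n ih =>
    have h := sum_zeckSet_succ (fun j => (F j : ℤ))
      (fun j => by push_cast; exact_mod_cast F_add_two (x := j) (by omega)) n
    simp only [Nat.cast_one, Nat.cast_zero, F_zero, F_one] at h
    norm_num at h
    zify at ih ⊢
    rw [h, ih]

lemma zshift_succ (n d : ℕ) : zshift (n + 1) d = zshift n d + F (d - zd0 n) := by
  have h := sum_zeckSet_succ (fun j => (F (j + d) : ℤ)) (fun j => by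
    push_cast
    rw [add_right_comm (j : ℤ) 2, add_right_comm (j : ℤ) 1, F_add_two (by omega), Nat.cast_add]) n
  zify
  simp only [zshift, Nat.cast_sum, Nat.cast_one, Nat.cast_zero, zero_add] at h ⊢
  rw [h, zd0]
  split_ifs
  · rw [add_comm 1, F_add_one (by omega), Nat.cast_one, Nat.cast_add]
    abel
  · simp

lemma zshift_monotone (d : ℕ) : Monotone fun n => zshift n d :=
  monotone_nat_of_le_succ fun n => by simp [zshift_succ]

lemma zshift_F (k d : ℕ) : zshift (F k) d = F (k + d) := by
  rw [zshift, zeckSet_F, Finset.sum_singleton]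

lemma phi_eq_goldenRatio : phi = Real.goldenRatio := rfl

lemma phi_pos : 0 < phi := Real.goldenRatio_pos

lemma zbar_monotone : Monotone zbar := by
  refine monotone_nat_of_le_succ fun n => ?_
  have h := sum_zeckSet_succ (fun j => phi ^ j) (fun j => by
    rw [phi_eq_goldenRatio]
    linarith [Real.goldenRatio_pow_sub_goldenRatio_pow j]) n
  rw [zbar, zbar, h, le_add_iff_nonneg_right, pow_one, pow_zero, phi_eq_goldenRatio]
  split_ifs
  · linarith [Real.one_lt_goldenRatio]
  · exact zero_le_one

def IsZeckendorfSet (s : Finset ℕ) : Prop := ∀ i ∈ s, i + 1 ∉ s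

lemma IsZeckendorfSet.mono {s t : Finset ℕ} (ht : IsZeckendorfSet t) (hst : s ⊆ t) :
    IsZeckendorfSet s :=
  fun i hi hi1 => ht i (hst hi) (hst hi1)

lemma isZeckendorfSet_zeckSet (n : ℕ) : IsZeckendorfSet (zeckSet n) := by
  induction n using Nat.strong_induction_on with
  | _ n ih =>
  rcases eq_or_ne n 0 with rfl | hn
  · simp [IsZeckendorfSet, zeckSet_zero]
  obtain ⟨k, hk, hnk⟩ := exists_F_le_lt_F_succ hn
  have hlow : ∀ j ∈ zeckSet (n - F k), j + 1 < k := fun j hj => by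
    have := lt_of_mem_zeckSet (sub_F_lt_F_sub_one hnk) hj
    omega
  have hrest := ih (n - F k) (by have := F_pos k (by omega); omega)
  rw [zeckSet_eq_insert hk hnk]
  intro i hi hi1
  rw [Finset.mem_insert] at hi hi1
  rcases hi with rfl | hi
  · rcases hi1 with h | h
    · omega
    · have := hlow _ h
      omega
  · rcases hi1 with h | h
    · have := hlow i hi
      omega
    · exact hrest i hi h

lemma sum_F_lt_of_isZeckendorfSet {s : Finset ℕ} (hs : IsZeckendorfSet s) {k : ℤ} (hk0 : -1 ≤ k)
    (hk : ∀ j ∈ s, (j : ℤ) < k) : ∑ j ∈ s, F j < F k := by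
  induction s using Finset.induction_on_max generalizing k with
  | empty => simpa using F_pos k (by omega)
  | insert a s hlt ih =>
    have hgap : ∀ j ∈ s, j + 1 < a := fun j hj => by
      have := hlt j hj
      have : j + 1 ≠ a := fun h =>
        hs j (Finset.mem_insert_of_mem hj) (h ▸ Finset.mem_insert_self a s)
      omega
    have hrest := ih (hs.mono (Finset.subset_insert a s)) (k := a - 1) (by omega)
      (fun j hj => by have := hgap j hj; omega)
    have hak := hk a (Finset.mem_insert_self a s)
    have := F_add_one (show -1 ≤ (a : ℤ) by omega)
    have := F_monotone (show (a : ℤ) + 1 ≤ k by omega)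
    rw [Finset.sum_insert fun h => (hlt a h).false]
    omega

lemma zeckSet_sum_F {s : Finset ℕ} (hs : IsZeckendorfSet s) : zeckSet (∑ j ∈ s, F j) = s := by
  induction s using Finset.induction_on_max with
  | empty => simp [zeckSet_zero]
  | insert a s hlt ih =>
    have hupper := sum_F_lt_of_isZeckendorfSet hs (k := a + 1) (by omega) fun j hj => by
      rcases Finset.mem_insert.mp hj with rfl | hj
      · omega
      · have := hlt j hj
        omega
    rw [Finset.sum_insert fun h => (hlt a h).false] at hupper ⊢
    rw [zeckSet_eq_insert (k := a) (by omega) hupper, Nat.add_sub_cancel_left,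
      ih (hs.mono (Finset.subset_insert a s))]

lemma zeckSet_zshift_add {a c d : ℕ} (hc : c < F (d - zd0 a)) :
    zeckSet (zshift a d + c) = (zeckSet a).map (addRightEmbedding d) ∪ zeckSet c := by
  have hgap : ∀ i ∈ zeckSet c, ∀ j ∈ zeckSet a, i + 2 ≤ j + d := by
    intro i hi j hj
    have hi' := lt_of_mem_zeckSet hc hi
    unfold zd0 at hi'
    split_ifs at hi' with h0
    · omega
    · have : j ≠ 0 := by
        rintro rfl
        exact h0 hj
      omega
  have hdisj : Disjoint ((zeckSet a).map (addRightEmbedding d)) (zeckSet c) := by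
    simp only [Finset.disjoint_left, Finset.mem_map, addRightEmbedding_apply]
    rintro _ ⟨j, hj, rfl⟩ hc'
    have := hgap _ hc' j hj
    omega
  have hZ : IsZeckendorfSet ((zeckSet a).map (addRightEmbedding d) ∪ zeckSet c) := by
    intro i hi hi1
    simp only [Finset.mem_union, Finset.mem_map, addRightEmbedding_apply] at hi hi1
    rcases hi with ⟨j, hj, rfl⟩ | hi <;> rcases hi1 with ⟨j', hj', hjj'⟩ | hi1
    · exact isZeckendorfSet_zeckSet a j hj (by rwa [show j + 1 = j' by omega])
    · have := hgap _ hi1 j hj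
      omega
    · have := hgap i hi j' hj'
      omega
    · exact isZeckendorfSet_zeckSet c i hi hi1
  have hval : zshift a d + c = ∑ j ∈ (zeckSet a).map (addRightEmbedding d) ∪ zeckSet c, F j := by
    rw [Finset.sum_union hdisj, Finset.sum_map, sum_zeckSet_F]
    simp [zshift]
  rw [hval, zeckSet_sum_F hZ]

lemma zd0_zshift_add {a c d : ℕ} (hd : d ≠ 0) (hc : c < F (d - zd0 a)) :
    zd0 (zshift a d + c) = zd0 c := by
  simp [zd0, zeckSet_zshift_add hc, hd]

lemma zbar_zshift (a d : ℕ) : zbar (zshift a d) = phi ^ d * zbar a := by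
  have h := zeckSet_zshift_add (a := a) (c := 0) (d := d)
    (F_pos _ (by unfold zd0; split_ifs <;> omega))
  rw [add_zero, zeckSet_zero, Finset.union_empty] at h
  rw [zbar, zbar, h, Finset.sum_map, Finset.mul_sum]
  simp only [addRightEmbedding_apply, pow_add, mul_comm]

lemma zd0_le_one (n : ℕ) : zd0 n ≤ 1 := by
  unfold zd0
  split_ifs <;> omega

lemma zd0_F_add {k c : ℕ} (hk : k ≠ 0) (hc : c < F (k - 1)) : zd0 (F k + c) = zd0 c := by
  have hupper : F k + c < F (k + 1) := by
    have := F_add_one (show -1 ≤ (k : ℤ) by omega)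
    omega
  simp only [zd0, zeckSet_eq_insert (Nat.le_add_right _ _) hupper, Nat.add_sub_cancel_left,
    Finset.mem_insert, hk.symm, false_or]

theorem sum_F_sub_zd0 : ∀ (K : ℕ) {x : ℤ}, -1 ≤ x →
    ∑ c ∈ Finset.range (F K), F (x - zd0 c) = F (x + K)
  | 0, x, _ => by simp [zd0, zeckSet_zero]
  | 1, x, hx => by
    simp [Finset.sum_range_succ, zd0, zeckSet_zero, zeckSet_one, F_add_one hx]
  | K + 2, x, hx => by
    have hsplit : F ((K + 2 : ℕ)) = F ((K + 1 : ℕ)) + F K := by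
      push_cast
      exact F_add_two (by omega)
    rw [hsplit, Finset.sum_range_add, sum_F_sub_zd0 (K + 1) hx,
      Finset.sum_congr rfl fun c hc => by
        rw [zd0_F_add (by omega) (by simpa using Finset.mem_range.mp hc)],
      sum_F_sub_zd0 K hx]
    push_cast
    rw [show x + (K + 2) = x + K + 2 by ring, F_add_two (by omega), add_assoc]

lemma card_filter_mem_Ico_eq_sum {ι α : Type*} [DecidableEq ι] [LinearOrder α] (s : Finset ι)
    (g : ι → α) {f : ℕ → α} (hf : Monotone f) (a n : ℕ) :
    #{i ∈ s | g i ∈ Set.Ico (f a) (f (a + n))} =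
      ∑ j ∈ Finset.range n, #{i ∈ s | g i ∈ Set.Ico (f (a + j)) (f (a + j + 1))} := by
  induction n with
  | zero => simp
  | succ n ih =>
    rw [Finset.sum_range_succ, ← ih, ← Finset.card_union_of_disjoint, ← Finset.filter_or]
    · refine congrArg Finset.card (Finset.filter_congr fun i _ => ?_)
      rw [← Set.mem_union, Set.Ico_union_Ico_eq_Ico (hf (by omega)) (hf (by omega)), add_assoc]
    · exact Finset.disjoint_filter.mpr fun i _ h₁ h₂ =>
        Set.disjoint_left.mp Set.Ico_disjoint_Ico_same h₁ h₂

lemma cnt2_eq_card (N : ℕ) (P : Fin N → ℝ × ℝ) (k₁ k₂ c₁ c₂ : ℕ) :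
    cnt2 N P k₁ k₂ c₁ c₂ =
      #{i ∈ {i | (P i).1 ∈ Set.Ico (zbar c₁ / phi ^ k₁) (zbar (c₁ + 1) / phi ^ k₁)} |
        (P i).2 ∈ Set.Ico (zbar c₂ / phi ^ k₂) (zbar (c₂ + 1) / phi ^ k₂)} := by
  rw [cnt2, Nat.card_eq_fintype_card, Fintype.card_subtype, Finset.filter_filter]

lemma cnt2_eq_sum_cnt2 {N : ℕ} (P : Fin N → ℝ × ℝ) {k₁ k₂ c₁ c₂ k L n : ℕ}
    (hL : zbar L / phi ^ k = zbar c₂ / phi ^ k₂)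
    (hR : zbar (L + n) / phi ^ k = zbar (c₂ + 1) / phi ^ k₂) :
    cnt2 N P k₁ k₂ c₁ c₂ = ∑ j ∈ Finset.range n, cnt2 N P k₁ k c₁ (L + j) := by
  have hf : Monotone fun b => zbar b / phi ^ k := fun a b hab =>
    div_le_div_of_nonneg_right (zbar_monotone hab) (pow_pos phi_pos k).le
  simp only [cnt2_eq_card, ← hL, ← hR]
  exact card_filter_mem_Ico_eq_sum _ _ hf L n

lemma zbar_zshift_div (a k d : ℕ) : zbar (zshift a d) / phi ^ (k + d) = zbar a / phi ^ k := by
  have := phi_pos.ne'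
  rw [zbar_zshift, pow_add]
  field_simp

theorem StronglyEquidistributed2.of_le_right {m k₁ k₂ k : ℕ} {P : Fin (F m) → ℝ × ℝ}
    (h : StronglyEquidistributed2 m k₁ k P) (hk : k₂ ≤ k) (hm : k₁ + k ≤ m) :
    StronglyEquidistributed2 m k₁ k₂ P := by
  obtain ⟨d, rfl⟩ := Nat.exists_eq_add_of_le hk
  rcases eq_or_ne d 0 with rfl | hd
  · simpa using h
  intro a₁ a₂ ha₁ ha₂
  have := zd0_le_one a₁
  have := zd0_le_one a₂
  set K := d - zd0 a₂
  have hK : (K : ℤ) = d - zd0 a₂ := by omega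
  set L := zshift a₂ d
  have hsucc : zshift (a₂ + 1) d = L + F K := by rw [zshift_succ, hK]
  have hbound : L + F K ≤ F (k₂ + d) := by
    rw [← hsucc, ← zshift_F]
    exact zshift_monotone d ha₂
  rw [cnt2_eq_sum_cnt2 P (zbar_zshift_div a₂ k₂ d) (by rw [← hsucc, zbar_zshift_div])]
  calc ∑ c ∈ Finset.range (F K), cnt2 (F m) P k₁ (k₂ + d) a₁ (L + c)
      = ∑ c ∈ Finset.range (F K), F ((m : ℤ) - (k₁ + zd0 a₁) - (k₂ + d) - zd0 c) :=
        Finset.sum_congr rfl fun c hc => by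
          have hc := Finset.mem_range.mp hc
          rw [h a₁ (L + c) ha₁ (by push_cast; omega), zd0_zshift_add hd (by rwa [← hK])]
          congr 1
          push_cast
          ring
    _ = F ((m : ℤ) - (k₁ + zd0 a₁) - (k₂ + d) + K) := sum_F_sub_zd0 K (by omega)
    _ = F ((m : ℤ) - (k₁ + zd0 a₁) - (k₂ + zd0 a₂)) := by
        rw [hK]
        congr 1
        ring

theorem statement14_general (m : ℕ) (P : Fin (F m) → ℝ × ℝ)
    (h : ∀ k : ℕ, k ≤ m → StronglyEquidistributed2 m (m - k) k P) :
    IsNet2 1 m P := by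
  intro k₁ k₂ hρ a₁ a₂ ha₁ ha₂ _ _
  have hk : k₁ + k₂ ≤ m := by
    unfold rho2 at hρ
    split_ifs at hρ <;> omega
  have hs := h (m - k₁) (by omega)
  rw [Nat.sub_sub_self (by omega)] at hs
  exact hs.of_le_right (by omega) (by omega) a₁ a₂ ha₁ ha₂

/-- If a point set `P` of `F^m` points in `[0,1)^2` is strongly
`(m−k,k)`-equidistributed in base φ for every `0 ≤ k ≤ m`, then `P` is a `(1,m,2)`-net
in base φ. -/
theorem statement14 (m : ℕ) (P : Fin (F m) → ℝ × ℝ)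
    (hP : ∀ i, (P i).1 ∈ Set.Ico (0 : ℝ) 1 ∧ (P i).2 ∈ Set.Ico (0 : ℝ) 1)
    (h : ∀ k : ℕ, k ≤ m → StronglyEquidistributed2 m (m - k) k P) :
    IsNet2 1 m P :=
  statement14_general m P h
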